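/- Let Ω ⊂ ℝ^d be an open bounded convex set and x, y, z ∈ Ω. If there exists a hyperplane π₀ that supports Ω at both b(x,y) and b(y,z), then F(x,y) + F(y,z) = F(x,z), where F is the Funk metric of Ω. -/

import Mathlib

/-- The affine hyperplane {p : ⟪ν, p⟫ = c}. -/
def hyperplane {d : ℕ} (ν : EuclideanSpace ℝ (Fin d)) (c : ℝ) :
    Set (EuclideanSpace ℝ (Fin d)) :=
  {p | (inner ℝ ν p : ℝ) = c}

/-- The hyperplane {⟪ν,·⟫ = c} (with unit normal ν) supports Ω: Ω lies in the closed
half-space {⟪ν,·⟫ ≤ c} and the hyperplane touches the closure of Ω. -/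
def IsSupporting {d : ℕ} (Ω : Set (EuclideanSpace ℝ (Fin d)))
    (ν : EuclideanSpace ℝ (Fin d)) (c : ℝ) : Prop :=
  ‖ν‖ = 1 ∧ (∀ p ∈ Ω, (inner ℝ ν p : ℝ) ≤ c) ∧ ∃ b ∈ closure Ω, (inner ℝ ν b : ℝ) = c

/-!
For a supporting hyperplane `⟪ν, ·⟫ = c`, the gap `c - ⟪ν, ·⟫` is affine, positive on `Ω` and
equal to the distance to the hyperplane. If `b = x + t • (y - x)` with `t > 1` lies in the closure
of `Ω`, its gap is nonnegative, which reads `gap x ≤ t / (t - 1) * gap y`, with equality exactly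
when the hyperplane passes through `b`. So `F(x, y) = log (t / (t - 1))`, attained at `π₀`, and
likewise `F(y, z) = log (u / (u - 1))`. Chaining the two gap inequalities bounds
`F(x, z)` by the sum, and `π₀` realizes the equality in both links, hence in the chain.
-/

open scoped RealInnerProductSpace

section

variable {d : ℕ}

lemma infDist_hyperplane {ν : EuclideanSpace ℝ (Fin d)} (hν : ‖ν‖ = 1) (c : ℝ)
    (p : EuclideanSpace ℝ (Fin d)) :
    Metric.infDist p (hyperplane ν c) = |c - ⟪ν, p⟫| := by
  have foot_mem : p + (c - ⟪ν, p⟫) • ν ∈ hyperplane ν c := by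
    simp only [hyperplane, Set.mem_ofPred_eq, inner_add_right, real_inner_smul_right,
      real_inner_self_eq_norm_sq, hν]
    ring
  refine le_antisymm ?_ ((Metric.le_infDist ⟨_, foot_mem⟩).2 fun q (hq : ⟪ν, q⟫ = c) => ?_)
  · calc Metric.infDist p (hyperplane ν c) ≤ dist p (p + (c - ⟪ν, p⟫) • ν) :=
          Metric.infDist_le_dist_of_mem foot_mem
      _ = |c - ⟪ν, p⟫| := by simp [dist_eq_norm, norm_smul, hν]
  · calc |c - ⟪ν, p⟫| = |⟪ν, p - q⟫| := by rw [inner_sub_right, hq, abs_sub_comm]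
      _ ≤ ‖ν‖ * ‖p - q‖ := abs_real_inner_le_norm ν (p - q)
      _ = dist p q := by rw [hν, one_mul, dist_eq_norm]

namespace IsSupporting

variable {Ω : Set (EuclideanSpace ℝ (Fin d))} {ν : EuclideanSpace ℝ (Fin d)} {c : ℝ}

lemma inner_lt_of_mem (hΩo : IsOpen Ω) (h : IsSupporting Ω ν c)
    {p : EuclideanSpace ℝ (Fin d)} (hp : p ∈ Ω) : ⟪ν, p⟫ < c := by
  obtain ⟨hν, hle, -⟩ := h
  obtain ⟨ε, hε, hball⟩ := Metric.isOpen_iff.1 hΩo p hp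
  have pushed_mem : p + (ε / 2) • ν ∈ Ω := hball <| by
    rw [Metric.mem_ball, dist_eq_norm, add_sub_cancel_left, norm_smul, hν, mul_one,
      Real.norm_eq_abs, abs_of_pos (half_pos hε)]
    exact half_lt_self hε
  have := hle _ pushed_mem
  rw [inner_add_right, real_inner_smul_right, real_inner_self_eq_norm_sq, hν, one_pow,
    mul_one] at this
  linarith

lemma inner_le_of_mem_closure (h : IsSupporting Ω ν c)
    {b : EuclideanSpace ℝ (Fin d)} (hb : b ∈ closure Ω) : ⟪ν, b⟫ ≤ c :=
  closure_minimal (s := Ω) (t := {p | ⟪ν, p⟫ ≤ c}) h.2.1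
    (isClosed_le (by fun_prop) continuous_const) hb

lemma infDist_hyperplane_eq (hΩo : IsOpen Ω) (h : IsSupporting Ω ν c)
    {p : EuclideanSpace ℝ (Fin d)} (hp : p ∈ Ω) :
    Metric.infDist p (hyperplane ν c) = c - ⟪ν, p⟫ := by
  rw [infDist_hyperplane h.1, abs_of_pos (sub_pos.2 (h.inner_lt_of_mem hΩo hp))]

end IsSupporting

lemma sSup_log_infDist_ratio_eq {Ω : Set (EuclideanSpace ℝ (Fin d))} (hΩo : IsOpen Ω)
    {p q : EuclideanSpace ℝ (Fin d)} (hp : p ∈ Ω) (hq : q ∈ Ω) {K : ℝ}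
    (hle : ∀ ν c, IsSupporting Ω ν c → c - ⟪ν, p⟫ ≤ K * (c - ⟪ν, q⟫))
    {ν₀ : EuclideanSpace ℝ (Fin d)} {c₀ : ℝ} (h₀ : IsSupporting Ω ν₀ c₀)
    (heq : c₀ - ⟪ν₀, p⟫ = K * (c₀ - ⟪ν₀, q⟫)) :
    sSup {r : ℝ | ∃ ν c, IsSupporting Ω ν c ∧
      r = Real.log (Metric.infDist p (hyperplane ν c) /
            Metric.infDist q (hyperplane ν c))} = Real.log K := by
  have gap_pos : ∀ {ν c}, IsSupporting Ω ν c → ∀ {s}, s ∈ Ω → 0 < c - ⟪ν, s⟫ :=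
    fun h _ hs => sub_pos.2 (h.inner_lt_of_mem hΩo hs)
  refine IsGreatest.csSup_eq ⟨⟨ν₀, c₀, h₀, ?_⟩, ?_⟩
  · rw [h₀.infDist_hyperplane_eq hΩo hp, h₀.infDist_hyperplane_eq hΩo hq, heq,
      mul_div_cancel_right₀ _ (gap_pos h₀ hq).ne']
  · rintro r ⟨ν, c, h, rfl⟩
    rw [h.infDist_hyperplane_eq hΩo hp, h.infDist_hyperplane_eq hΩo hq]
    exact Real.log_le_log (div_pos (gap_pos h hp) (gap_pos h hq))
      ((div_le_iff₀ (gap_pos h hq)).2 (hle ν c h))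

section ExitPoint

variable {ν x y : EuclideanSpace ℝ (Fin d)} {c t : ℝ}

lemma sub_inner_add_smul_sub (ht : 1 < t) :
    c - ⟪ν, x + t • (y - x)⟫ =
      (t - 1) * (t / (t - 1) * (c - ⟪ν, y⟫) - (c - ⟪ν, x⟫)) := by
  rw [inner_add_right, real_inner_smul_right, inner_sub_right]
  field_simp [(sub_pos.2 ht).ne']
  ring

lemma sub_inner_le_of_exit (ht : 1 < t) (hb : ⟪ν, x + t • (y - x)⟫ ≤ c) :
    c - ⟪ν, x⟫ ≤ t / (t - 1) * (c - ⟪ν, y⟫) := by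
  have := sub_nonneg.2 hb
  rw [sub_inner_add_smul_sub ht] at this
  exact sub_nonneg.1 (nonneg_of_mul_nonneg_right this (sub_pos.2 ht))

lemma sub_inner_eq_of_exit (ht : 1 < t) (hb : ⟪ν, x + t • (y - x)⟫ = c) :
    c - ⟪ν, x⟫ = t / (t - 1) * (c - ⟪ν, y⟫) := by
  have := sub_eq_zero.2 hb.symm
  rw [sub_inner_add_smul_sub ht, mul_eq_zero] at this
  exact (sub_eq_zero.1 (this.resolve_left (sub_pos.2 ht).ne')).symm

end ExitPoint

end

theorem stmt6_general {d : ℕ} (Ω : Set (EuclideanSpace ℝ (Fin d)))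
    (hΩo : IsOpen Ω)
    (F : EuclideanSpace ℝ (Fin d) → EuclideanSpace ℝ (Fin d) → ℝ)
    (hF : ∀ x y, F x y = sSup {r : ℝ | ∃ ν c, IsSupporting Ω ν c ∧
      r = Real.log (Metric.infDist x (hyperplane ν c) /
            Metric.infDist y (hyperplane ν c))})
    (x y z : EuclideanSpace ℝ (Fin d)) (hx : x ∈ Ω) (hy : y ∈ Ω) (hz : z ∈ Ω)
    (bxy byz : EuclideanSpace ℝ (Fin d))
    (hbxy : bxy ∈ frontier Ω) (hbyz : byz ∈ frontier Ω)
    (t u : ℝ) (ht : 1 < t) (hu : 1 < u)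
    (hbxye : bxy = x + t • (y - x)) (hbyze : byz = y + u • (z - y))
    (ν₀ : EuclideanSpace ℝ (Fin d)) (c₀ : ℝ) (hsupp : IsSupporting Ω ν₀ c₀)
    (hπxy : (inner ℝ ν₀ bxy : ℝ) = c₀) (hπyz : (inner ℝ ν₀ byz : ℝ) = c₀) :
    F x y + F y z = F x z := by
  subst hbxye hbyze
  have hK₁ : 0 < t / (t - 1) := div_pos (by linarith) (by linarith)
  have hK₂ : 0 < u / (u - 1) := div_pos (by linarith) (by linarith)
  have le_xy ν c (h : IsSupporting Ω ν c) :=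
    sub_inner_le_of_exit ht (h.inner_le_of_mem_closure (frontier_subset_closure hbxy))
  have le_yz ν c (h : IsSupporting Ω ν c) :=
    sub_inner_le_of_exit hu (h.inner_le_of_mem_closure (frontier_subset_closure hbyz))
  have le_xz ν c (h : IsSupporting Ω ν c) :
      c - ⟪ν, x⟫ ≤ t / (t - 1) * (u / (u - 1)) * (c - ⟪ν, z⟫) := by
    rw [mul_assoc]
    exact (le_xy ν c h).trans (mul_le_mul_of_nonneg_left (le_yz ν c h) hK₁.le)
  have eq_xy := sub_inner_eq_of_exit ht hπxy
  have eq_yz := sub_inner_eq_of_exit hu hπyz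
  have eq_xz : c₀ - ⟪ν₀, x⟫ = t / (t - 1) * (u / (u - 1)) * (c₀ - ⟪ν₀, z⟫) := by
    rw [eq_xy, eq_yz, mul_assoc]
  rw [hF, hF, hF, sSup_log_infDist_ratio_eq hΩo hx hy le_xy hsupp eq_xy,
    sSup_log_infDist_ratio_eq hΩo hy hz le_yz hsupp eq_yz,
    sSup_log_infDist_ratio_eq hΩo hx hz le_xz hsupp eq_xz, Real.log_mul hK₁.ne' hK₂.ne']

/-- Equality case of the triangle inequality for the Funk metric: if a single hyperplane π₀
supports Ω at both exit points b(x,y) and b(y,z), then F(x,y) + F(y,z) = F(x,z). -/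
theorem stmt6 {d : ℕ} (Ω : Set (EuclideanSpace ℝ (Fin d)))
    (hΩo : IsOpen Ω) (hΩb : Bornology.IsBounded Ω) (hΩc : Convex ℝ Ω)
    (F : EuclideanSpace ℝ (Fin d) → EuclideanSpace ℝ (Fin d) → ℝ)
    (hF : ∀ x y, F x y = sSup {r : ℝ | ∃ ν c, IsSupporting Ω ν c ∧
      r = Real.log (Metric.infDist x (hyperplane ν c) /
            Metric.infDist y (hyperplane ν c))})
    (x y z : EuclideanSpace ℝ (Fin d)) (hx : x ∈ Ω) (hy : y ∈ Ω) (hz : z ∈ Ω)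
    (hxy : x ≠ y) (hyz : y ≠ z)
    (bxy byz : EuclideanSpace ℝ (Fin d))
    (hbxy : bxy ∈ frontier Ω) (hbyz : byz ∈ frontier Ω)
    (t u : ℝ) (ht : 1 < t) (hu : 1 < u)
    (hbxye : bxy = x + t • (y - x)) (hbyze : byz = y + u • (z - y))
    (ν₀ : EuclideanSpace ℝ (Fin d)) (c₀ : ℝ) (hsupp : IsSupporting Ω ν₀ c₀)
    (hπxy : (inner ℝ ν₀ bxy : ℝ) = c₀) (hπyz : (inner ℝ ν₀ byz : ℝ) = c₀) :
    F x y + F y z = F x z :=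
  stmt6_general Ω hΩo F hF x y z hx hy hz bxy byz hbxy hbyz t u ht hu hbxye hbyze ν₀ c₀ hsupp hπxy
    hπyz
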